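/- arXiv:2007.03737 — 3 statements merged into one kernel-verified Lean document; each statement's English description precedes it below -/
import Mathlib

section
/- Let G be a tree with an even number of nodes, and let x be a node of G of degree one or two. Then there exists an edge e incident to x such that deleting e from G yields exactly two component trees G₀ and G₁, each with an odd number of nodes. -/
/-!
Deleting the edges at `x` splits the tree into the isolated vertex `x` and one branch per
neighbour `y` of `x`. The number of odd components of any finite graph has the parity of its
vertex count, so besides `{x}` there is another odd component, i.e. an odd branch at some
neighbour `y`. That branch is exactly the side of `y` when only the edge `xy` is deleted, and the
side of `x` is its complement, which is odd because the tree has an even number of vertices.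
-/

namespace SimpleGraph

variable {V : Type*} {G : SimpleGraph V} {x y u v : V}

lemma deleteIncidenceSet_le_deleteEdges (x y : V) :
    G.deleteIncidenceSet x ≤ G.deleteEdges {s(x, y)} := by
  intro a b hab
  rw [deleteIncidenceSet_adj] at hab
  simp [hab.1, hab.2.1, hab.2.2]

lemma Walk.reachable_deleteIncidenceSet (p : G.Walk u v) (hx : x ∉ p.support) :
    (G.deleteIncidenceSet x).Reachable u v := by
  induction p with
  | nil => rfl
  | cons h p ih =>
    simp only [Walk.support_cons, List.mem_cons, not_or] at hx
    have hadj := deleteIncidenceSet_adj.mpr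
      ⟨h, Ne.symm hx.1, fun e ↦ hx.2 (e ▸ p.start_mem_support)⟩
    exact hadj.reachable.trans (ih hx.2)

lemma supp_connectedComponentMk_deleteIncidenceSet_self (x : V) :
    ((G.deleteIncidenceSet x).connectedComponentMk x).supp = {x} := by
  ext v
  simp only [ConnectedComponent.mem_supp_iff, ConnectedComponent.eq, Set.mem_singleton_iff]
  refine ⟨fun h ↦ ?_, fun h ↦ h ▸ .rfl⟩
  obtain ⟨p⟩ := h.symm
  cases p with
  | nil => rfl
  | cons h _ => exact absurd rfl (deleteIncidenceSet_adj.mp h).2.1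

lemma Preconnected.exists_adj_reachable_deleteIncidenceSet (hG : G.Preconnected) (hv : v ≠ x) :
    ∃ y, G.Adj x y ∧ (G.deleteIncidenceSet x).Reachable y v := by
  obtain ⟨p, hp⟩ := (hG x v).exists_isPath
  cases p with
  | nil => exact absurd rfl hv
  | cons h q =>
    exact ⟨_, h, q.reachable_deleteIncidenceSet (Walk.cons_isPath_iff _ _ |>.mp hp).2⟩

lemma Preconnected.reachable_deleteEdges_or (hG : G.Preconnected) (x y v : V) :
    (G.deleteEdges {s(x, y)}).Reachable x v ∨ (G.deleteEdges {s(x, y)}).Reachable y v := by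
  rcases eq_or_ne v x with rfl | hv
  · exact .inl .rfl
  obtain ⟨z, hxz, hzv⟩ := hG.exists_adj_reachable_deleteIncidenceSet hv
  have hzv' := hzv.mono (deleteIncidenceSet_le_deleteEdges x y)
  rcases eq_or_ne z y with rfl | hzy
  · exact .inr hzv'
  · have hxz' : (G.deleteEdges {s(x, y)}).Adj x z := by simp [hxz, hzy, hxz.ne.symm]
    exact .inl (hxz'.reachable.trans hzv')

lemma IsAcyclic.supp_connectedComponentMk_deleteEdges (hG : G.IsAcyclic) (hxy : G.Adj x y) :
    ((G.deleteEdges {s(x, y)}).connectedComponentMk y).supp =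
      ((G.deleteIncidenceSet x).connectedComponentMk y).supp := by
  classical
  ext v
  simp only [ConnectedComponent.mem_supp_iff, ConnectedComponent.eq]
  refine ⟨fun ⟨p⟩ ↦ ?_, (·.mono (deleteIncidenceSet_le_deleteEdges x y))⟩
  have hx : x ∉ p.support := fun hx ↦
    isAcyclic_iff_forall_adj_isBridge.mp hG hxy (p.dropUntil x hx).reachable
  exact (p.mapLe (deleteEdges_le _)).reachable_deleteIncidenceSet (by simpa using hx)

lemma IsTree.compl_supp_deleteEdges (hG : G.IsTree) (hxy : G.Adj x y) :
    ((G.deleteEdges {s(x, y)}).connectedComponentMk y).suppᶜ =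
      ((G.deleteEdges {s(x, y)}).connectedComponentMk x).supp := by
  ext v
  simp only [Set.mem_compl_iff, ConnectedComponent.mem_supp_iff, ConnectedComponent.eq]
  refine ⟨fun hvy ↦ ?_, fun hvx hvy ↦ ?_⟩
  · exact (hG.connected.preconnected.reachable_deleteEdges_or x y v).resolve_right
      (fun h ↦ hvy h.symm) |>.symm
  · exact isAcyclic_iff_forall_adj_isBridge.mp hG.isAcyclic hxy (hvx.symm.trans hvy)

lemma Preconnected.exists_adj_odd_ncard_supp_deleteIncidenceSet [Finite V]
    (hG : G.Preconnected) (hV : Even (Nat.card V)) (x : V) :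
    ∃ y, G.Adj x y ∧ Odd ((G.deleteIncidenceSet x).connectedComponentMk y).supp.ncard := by
  set H := G.deleteIncidenceSet x
  have hx : H.connectedComponentMk x ∈ H.oddComponents := by
    simp [H, supp_connectedComponentMk_deleteIncidenceSet_self]
  have hcard : 1 < H.oddComponents.ncard := by
    have hpos := (Set.ncard_pos (Set.toFinite _)).mpr ⟨_, hx⟩
    obtain ⟨k, hk⟩ := Nat.not_odd_iff_even.mp <|
      (odd_ncard_oddComponents (G := H)).not.mpr (Nat.not_odd_iff_even.mpr hV)
    omega
  obtain ⟨c, hc, hcx⟩ := Set.exists_ne_of_one_lt_ncard hcard (H.connectedComponentMk x)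
  induction c using ConnectedComponent.ind with | h v => ?_
  have hv : v ≠ x := by rintro rfl; exact hcx rfl
  obtain ⟨y, hxy, hyv⟩ := hG.exists_adj_reachable_deleteIncidenceSet hv
  exact ⟨y, hxy, ConnectedComponent.eq.mpr hyv ▸ hc⟩

end SimpleGraph

theorem tree_even_delete_edge_odd_components_general
    {V : Type*} [Fintype V] (G : SimpleGraph V)
    (hT : G.IsTree) (hEven : Even (Fintype.card V))
    (x : V) :
    ∃ y : V, G.Adj x y ∧
      (let G' := G.deleteEdges {s(x, y)}
      (G'.connectedComponentMk x ≠ G'.connectedComponentMk y) ∧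
      (∀ v : V, G'.connectedComponentMk v = G'.connectedComponentMk x ∨
        G'.connectedComponentMk v = G'.connectedComponentMk y) ∧
      Odd (G'.connectedComponentMk x).supp.ncard ∧
      Odd (G'.connectedComponentMk y).supp.ncard) := by
  rw [← Nat.card_eq_fintype_card] at hEven
  obtain ⟨y, hxy, hodd⟩ :=
    hT.connected.preconnected.exists_adj_odd_ncard_supp_deleteIncidenceSet hEven x
  have hsupp_y := hT.isAcyclic.supp_connectedComponentMk_deleteEdges hxy
  have hcompl := hT.compl_supp_deleteEdges hxy
  refine ⟨y, hxy, fun h ↦ ?_, fun v ↦ ?_, ?_, hsupp_y ▸ hodd⟩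
  · exact SimpleGraph.isAcyclic_iff_forall_adj_isBridge.mp hT.isAcyclic hxy
      (SimpleGraph.ConnectedComponent.eq.mp h)
  · by_cases hv : v ∈ ((G.deleteEdges {s(x, y)}).connectedComponentMk y).supp
    · exact .inr hv
    · exact .inl (show v ∈ ((G.deleteEdges {s(x, y)}).connectedComponentMk x).supp from
        hcompl ▸ hv)
  · rw [← hcompl, Set.ncard_compl, hsupp_y]
    exact Nat.Even.sub_odd (Set.ncard_le_card _) hEven hodd

/-- **Lemma (OddOdd).** Let `G` be a tree with an even number of nodes, and `x` a node of
degree one or two. Then there is an edge `e = s(x,y)` incident to `x` such that deleting `e`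
yields exactly two components (those of `x` and of `y`), each with an odd number of nodes. -/
theorem tree_even_delete_edge_odd_components
    {V : Type*} [Fintype V] (G : SimpleGraph V) [DecidableRel G.Adj]
    (hT : G.IsTree) (hEven : Even (Fintype.card V))
    (x : V) (hx : G.degree x = 1 ∨ G.degree x = 2) :
    ∃ y : V, G.Adj x y ∧
      (let G' := G.deleteEdges {s(x, y)}
      (G'.connectedComponentMk x ≠ G'.connectedComponentMk y) ∧
      (∀ v : V, G'.connectedComponentMk v = G'.connectedComponentMk x ∨
        G'.connectedComponentMk v = G'.connectedComponentMk y) ∧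
      Odd (G'.connectedComponentMk x).supp.ncard ∧
      Odd (G'.connectedComponentMk y).supp.ncard) :=
  tree_even_delete_edge_odd_components_general G hT hEven x
end

section
/- Let P be a simple polygon monitored by a single entire boundary half-guard g at a point b ∈ ∂P, and let vw be a side of P not containing b. Then the (possibly degenerate) triangle T with vertices b, v, w is contained in P, and g is an entire boundary half-guard of T that sees every point of T. -/
open Set

abbrev Pt := EuclideanSpace ℝ (Fin 2)

structure SimplePolygon (n : ℕ) [NeZero n] where
  verts : Fin n → Pt
  carrier : Set Pt
  compact' : IsCompact carrier
  nonempty_interior' : (interior carrier).Nonempty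
  closure_interior' : closure (interior carrier) = carrier
  frontier_eq' : frontier carrier = ⋃ i : Fin n, segment ℝ (verts i) (verts (i + 1))
  inj' : Function.Injective verts
  not_collinear' : ∀ i : Fin n, ¬ Collinear ℝ {verts i, verts (i + 1), verts (i + 2)}
  edges_meet' : ∀ i j : Fin n, i ≠ j →
    segment ℝ (verts i) (verts (i + 1)) ∩ segment ℝ (verts j) (verts (j + 1)) ⊆
      {verts i, verts (i + 1), verts j, verts (j + 1)}

structure HalfGuard where
  pos : Pt
  normal : Pt
  normal_ne : normal ≠ 0

/-- The closed half-plane of a half-guard; its boundary line passes through `pos`. -/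
def HalfGuard.region (g : HalfGuard) : Set Pt :=
  {p | 0 ≤ (inner ℝ g.normal (p - g.pos) : ℝ)}

/-- `g` sees `y` within `P` if the segment from `g.pos` to `y` lies in `P ∩ H_g`. -/
def Sees (P : Set Pt) (g : HalfGuard) (y : Pt) : Prop :=
  segment ℝ g.pos y ⊆ P ∩ g.region

/-- An entire boundary half-guard: positioned on the boundary, with the local
interior-angle cone of `P` at `pos` contained in its half-plane. -/
def IsEntire (P : Set Pt) (g : HalfGuard) : Prop :=
  g.pos ∈ frontier P ∧ ∃ ε > 0, P ∩ Metric.ball g.pos ε ⊆ g.region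

def Monitors (P : Set Pt) (G : Finset HalfGuard) : Prop :=
  ∀ y ∈ P, ∃ g ∈ G, Sees P g y

/-- Mutual visibility graph on a guard set. -/
def visGraph (P : Set Pt) (G : Finset HalfGuard) : SimpleGraph G :=
  SimpleGraph.fromRel (fun g h => Sees P g.1 h.1.pos ∧ Sees P h.1 g.1.pos)

/-- Cooperative half-guard set. -/
def IsCHG (P : Set Pt) (G : Finset HalfGuard) : Prop :=
  Monitors P G ∧ (visGraph P G).Connected

/-- `g` is aligned to segment `[a,b]` in `P`. -/
def Aligned (P : Set Pt) (a b : Pt) (g : HalfGuard) : Prop :=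
  Collinear ℝ {a, b, g.pos} ∧ (∀ y ∈ segment ℝ a b, Sees P g y) ∧
  (g.pos ∈ segment ℝ a b → ∀ y ∈ segment ℝ a b, (inner ℝ g.normal (y - g.pos) : ℝ) = 0)

def SimplePolygon.ConvexAt {n : ℕ} [NeZero n] (P : SimplePolygon n) (i : Fin n) : Prop :=
  ∃ ε > 0, Convex ℝ (P.carrier ∩ Metric.ball (P.verts i) ε)

def SimplePolygon.IsDiagonal {n : ℕ} [NeZero n] (P : SimplePolygon n) (i j : Fin n) : Prop :=
  i ≠ j ∧ j ≠ i + 1 ∧ i ≠ j + 1 ∧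
    openSegment ℝ (P.verts i) (P.verts j) ⊆ interior P.carrier

def SimplePolygon.IsOrthogonal {n : ℕ} [NeZero n] (P : SimplePolygon n) : Prop :=
  ∀ i : Fin n,
    (inner ℝ (P.verts (i + 1) - P.verts i) (P.verts (i + 2) - P.verts (i + 1)) : ℝ) = 0

/-! The triangle `conv {b, v, w}` is the union of the segments from `b` to the points of the side
`[v, w]`. Each such point lies on `∂P ⊆ P`, so `g` sees it, i.e. the whole segment lies in
`P ∩ H_g`; hence the triangle lies in `P ∩ H_g`. Being convex and containing `b`, the triangle is
seen from `b` inside itself, and `b` stays on its boundary because it is not interior to the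
larger set `P`. -/

theorem convexHull_insert_subset_of_segment_subset {𝕜 E : Type*} [Field 𝕜] [LinearOrder 𝕜]
    [IsStrictOrderedRing 𝕜] [AddCommGroup E] [Module 𝕜 E] {s A : Set E} {x : E}
    (hs : s.Nonempty) (h : ∀ y ∈ convexHull 𝕜 s, segment 𝕜 x y ⊆ A) :
    convexHull 𝕜 (insert x s) ⊆ A := by
  rw [convexHull_insert hs, convexJoin_singleton_left]
  exact iUnion₂_subset h

theorem SimplePolygon.segment_subset_carrier {n : ℕ} [NeZero n] (P : SimplePolygon n) (i : Fin n) :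
    segment ℝ (P.verts i) (P.verts (i + 1)) ⊆ P.carrier := by
  intro y hy
  have hy_frontier : y ∈ frontier P.carrier := by
    rw [P.frontier_eq']
    exact mem_iUnion.2 ⟨i, hy⟩
  exact P.compact'.isClosed.frontier_subset hy_frontier

theorem Convex.sees {T : Set Pt} {g : HalfGuard} (hT : Convex ℝ T) (hb : g.pos ∈ T)
    (hreg : T ⊆ g.region) {y : Pt} (hy : y ∈ T) : Sees T g y :=
  fun _ hz => ⟨hT.segment_subset hb hy hz, hreg (hT.segment_subset hb hy hz)⟩

theorem IsEntire.of_subset {P T : Set Pt} {g : HalfGuard} (hent : IsEntire P g) (hTP : T ⊆ P)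
    (hb : g.pos ∈ T) (hreg : T ⊆ g.region) : IsEntire T g := by
  refine ⟨(mem_frontier_iff_notMem_interior hb).2 fun h => ?_, 1, one_pos, fun _ hp => hreg hp.1⟩
  exact hent.1.2 (interior_mono hTP h)

theorem entire_guard_monitors_triangle_over_side_general
    {n : ℕ} [NeZero n] (P : SimplePolygon n)
    (g : HalfGuard) (hent : IsEntire P.carrier g)
    (hmon : ∀ y ∈ P.carrier, Sees P.carrier g y)
    (i : Fin n) :
    convexHull ℝ {g.pos, P.verts i, P.verts (i + 1)} ⊆ P.carrier ∧
    IsEntire (convexHull ℝ {g.pos, P.verts i, P.verts (i + 1)}) g ∧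
    ∀ y ∈ convexHull ℝ {g.pos, P.verts i, P.verts (i + 1)},
      Sees (convexHull ℝ {g.pos, P.verts i, P.verts (i + 1)}) g y := by
  set T := convexHull ℝ {g.pos, P.verts i, P.verts (i + 1)}
  have hT : T ⊆ P.carrier ∩ g.region := by
    refine convexHull_insert_subset_of_segment_subset (insert_nonempty _ _) fun y hy => ?_
    rw [convexHull_pair] at hy
    exact hmon y (P.segment_subset_carrier i hy)
  have hbT : g.pos ∈ T := subset_convexHull ℝ _ (mem_insert _ _)
  have hTP : T ⊆ P.carrier := hT.trans inter_subset_left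
  have hTreg : T ⊆ g.region := hT.trans inter_subset_right
  exact ⟨hTP, hent.of_subset hTP hbT hTreg,
    fun _ hy => (convex_convexHull ℝ _).sees hbT hTreg hy⟩

/-- **Lemma (AddTri).** Assume `P` is monitored by a single entire boundary half-guard `g`
(at `b = g.pos ∈ ∂P`) and let `[v, w] = [verts i, verts (i+1)]` be a side of `P` not
containing `b`. Then the (possibly degenerate) triangle `T = conv {b, v, w}` is contained in
`P`, and `g` is an entire boundary half-guard of `T` that sees every point of `T`. -/
theorem entire_guard_monitors_triangle_over_side
    {n : ℕ} [NeZero n] (P : SimplePolygon n)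
    (g : HalfGuard) (hent : IsEntire P.carrier g)
    (hmon : ∀ y ∈ P.carrier, Sees P.carrier g y)
    (i : Fin n) (hb : g.pos ∉ segment ℝ (P.verts i) (P.verts (i + 1))) :
    convexHull ℝ {g.pos, P.verts i, P.verts (i + 1)} ⊆ P.carrier ∧
    IsEntire (convexHull ℝ {g.pos, P.verts i, P.verts (i + 1)}) g ∧
    ∀ y ∈ convexHull ℝ {g.pos, P.verts i, P.verts (i + 1)},
      Sees (convexHull ℝ {g.pos, P.verts i, P.verts (i + 1)}) g y :=
  entire_guard_monitors_triangle_over_side_general P g hent hmon i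
end

section
/- Let P be a simple polygon partitioned into two polygons P₁ and P₂ meeting in a line segment s = P₁ ∩ P₂. For i = 1, 2, let G_i be an s-aligned cooperative half-guard set for P_i, with s-aligned guards g₁ ∈ G₁ and g₂ ∈ G₂. Then g₁ and g₂ see each other in P, and consequently G₁ ∪ G₂ is a cooperative half-guard set for P. -/
open Set

noncomputable instance : DecidableEq HalfGuard := Classical.decEq _

/-!
Both aligned guards lie on the line through `s = [a, b]`, parametrised by `lineMap a b`.
Splitting `[g₁, g₂]` at `a` gives `[g₁, a] ⊆ P₁` and `[a, g₂] ⊆ P₂`. For the half-plane of `g₁`: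
if `g₁ ∈ [g₂, a]` then `g₁ ∈ P₁ ∩ P₂ = s`, so alignment puts the whole line on `∂H_{g₁}`;
otherwise `g₂` lies on the same side of `g₁` as `a`, and `a ∈ H_{g₁}`.
Since `g₁` and `g₂` see each other, their edge joins the two connected visibility graphs.
-/

open AffineMap

section Line

variable {E : Type*} [AddCommGroup E] [Module ℝ E]

theorem segment_lineMap_subset_union (x y : E) (r s t : ℝ) :
    segment ℝ (lineMap x y r) (lineMap x y t) ⊆
      segment ℝ (lineMap x y r) (lineMap x y s) ∪ segment ℝ (lineMap x y s) (lineMap x y t) := by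
  simp only [← image_segment, segment_eq_uIcc, ← image_union]
  exact image_mono uIcc_subset_uIcc_union_uIcc

theorem lineMap_mem_segment_of_mem_uIcc (x y : E) {r s t : ℝ} (h : r ∈ uIcc s t) :
    lineMap x y r ∈ segment ℝ (lineMap x y s) (lineMap x y t) := by
  rw [← image_segment, segment_eq_uIcc]
  exact mem_image_of_mem _ h

end Line

theorem inner_lineMap_sub_lineMap {E : Type*} [NormedAddCommGroup E] [InnerProductSpace ℝ E]
    (v x y : E) (s t : ℝ) :
    inner ℝ v (lineMap x y t - lineMap x y s) = (t - s) * inner ℝ v (y - x) := by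
  simp only [lineMap_apply_module', inner_add_right, inner_sub_right, inner_smul_right]
  ring

theorem Collinear.exists_lineMap_eq {k V P : Type*} [DivisionRing k] [AddCommGroup V]
    [Module k V] [AddTorsor V P] {a b p : P} (h : Collinear k {a, b, p}) (hab : a ≠ b) :
    ∃ r : k, lineMap a b r = p :=
  mem_affineSpan_pair_iff_exists_lineMap_eq.1
    (h.mem_affineSpan_of_mem_of_ne (by simp) (by simp) (by simp) hab)

theorem sub_mul_nonneg_of_notMem_uIcc {s t c : ℝ} (hs : s ∉ uIcc t 0) (h : 0 ≤ (0 - s) * c) :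
    0 ≤ (t - s) * c := by
  have hsign : 0 < (t - s) * (0 - s) := by
    rw [uIcc, mem_Icc, not_and_or, not_le, not_le, lt_min_iff, max_lt_iff] at hs
    rcases hs with ⟨hst, hs0⟩ | ⟨hts, hs0⟩
    · exact mul_pos (by linarith) (by linarith)
    · exact mul_pos_of_neg_of_neg (by linarith) (by linarith)
  refine nonneg_of_mul_nonneg_left ?_ hsign
  calc 0 ≤ (t - s) ^ 2 * ((0 - s) * c) := mul_nonneg (sq_nonneg _) h
    _ = (t - s) * c * ((t - s) * (0 - s)) := by ring

theorem HalfGuard.segment_subset_region (g : HalfGuard) {q : Pt} (hq : q ∈ g.region) :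
    segment ℝ g.pos q ⊆ g.region := by
  rw [segment_eq_image']
  rintro _ ⟨θ, hθ, rfl⟩
  simpa [HalfGuard.region, inner_smul_right] using mul_nonneg hθ.1 hq

theorem Sees.mono {P Q : Set Pt} {g : HalfGuard} {y : Pt} (hPQ : P ⊆ Q) (h : Sees P g y) :
    Sees Q g y :=
  fun _ hp => ⟨hPQ (h hp).1, (h hp).2⟩

theorem Aligned.sees_pos_union {P₁ P₂ : Set Pt} {a b : Pt} {g₁ g₂ : HalfGuard} (hab : a ≠ b)
    (hinter : P₁ ∩ P₂ ⊆ segment ℝ a b) (hal₁ : Aligned P₁ a b g₁) (hal₂ : Aligned P₂ a b g₂) :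
    Sees (P₁ ∪ P₂) g₁ g₂.pos := by
  obtain ⟨hcol₁, hseg₁, hperp₁⟩ := hal₁
  obtain ⟨hcol₂, hseg₂, -⟩ := hal₂
  obtain ⟨t₁, ht₁⟩ := hcol₁.exists_lineMap_eq hab
  obtain ⟨t₂, ht₂⟩ := hcol₂.exists_lineMap_eq hab
  have hsee₁ : Sees P₁ g₁ a := hseg₁ a (left_mem_segment ℝ a b)
  have hsee₂ : Sees P₂ g₂ a := hseg₂ a (left_mem_segment ℝ a b)
  set c := inner ℝ g₁.normal (b - a)
  have hφ (u : ℝ) : inner ℝ g₁.normal (lineMap a b u - g₁.pos) = (u - t₁) * c := by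
    rw [← ht₁, inner_lineMap_sub_lineMap]
  have hφa : inner ℝ g₁.normal (a - g₁.pos) = (0 - t₁) * c := by
    rw [← hφ, lineMap_apply_zero]
  have hregion : g₂.pos ∈ g₁.region := by
    change 0 ≤ inner ℝ g₁.normal (g₂.pos - g₁.pos)
    rw [← ht₂, hφ]
    by_cases hg₁ : g₁.pos ∈ segment ℝ g₂.pos a
    · -- here `g₁ ∈ P₁ ∩ P₂`, so alignment makes `c` vanish
      have hs : g₁.pos ∈ segment ℝ a b :=
        hinter ⟨(hsee₁ (left_mem_segment ℝ _ _)).1, (hsee₂ hg₁).1⟩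
      have h0 : (0 - t₁) * c = 0 := hφa ▸ hperp₁ hs a (left_mem_segment ℝ a b)
      have h1 : (1 - t₁) * c = 0 := by
        rw [← hφ, lineMap_apply_one]; exact hperp₁ hs b (right_mem_segment ℝ a b)
      have hc : c = 0 := by linear_combination h1 - h0
      simp [hc]
    · refine sub_mul_nonneg_of_notMem_uIcc (fun h => hg₁ ?_)
        (hφa ▸ (hsee₁ (right_mem_segment ℝ _ _)).2)
      simpa [ht₁, ht₂] using lineMap_mem_segment_of_mem_uIcc a b h
  intro p hp
  refine ⟨?_, g₁.segment_subset_region hregion hp⟩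
  rw [← ht₁, ← ht₂] at hp
  have hsplit := segment_lineMap_subset_union a b t₁ 0 t₂ hp
  rw [lineMap_apply_zero, ht₁, ht₂] at hsplit
  rcases hsplit with h | h
  · exact Or.inl (hsee₁ h).1
  · exact Or.inr (hsee₂ (segment_symm ℝ a g₂.pos ▸ h)).1

theorem Monitors.union {P₁ P₂ : Set Pt} {G₁ G₂ : Finset HalfGuard} (h₁ : Monitors P₁ G₁)
    (h₂ : Monitors P₂ G₂) : Monitors (P₁ ∪ P₂) (G₁ ∪ G₂) := by
  rintro y (hy | hy)
  · obtain ⟨g, hg, hsees⟩ := h₁ y hy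
    exact ⟨g, Finset.mem_union_left _ hg, hsees.mono subset_union_left⟩
  · obtain ⟨g, hg, hsees⟩ := h₂ y hy
    exact ⟨g, Finset.mem_union_right _ hg, hsees.mono subset_union_right⟩

theorem visGraph_adj_mono {P Q : Set Pt} {G H : Finset HalfGuard} (hPQ : P ⊆ Q) (hGH : G ⊆ H)
    {x y : G} (h : (visGraph P G).Adj x y) :
    (visGraph Q H).Adj ⟨x, hGH x.2⟩ ⟨y, hGH y.2⟩ := by
  simp only [visGraph, SimpleGraph.fromRel_adj, ne_eq, Subtype.mk.injEq] at h ⊢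
  obtain ⟨hne, hxy | hxy⟩ := h
  · exact ⟨fun h => hne (Subtype.ext h), Or.inl ⟨hxy.1.mono hPQ, hxy.2.mono hPQ⟩⟩
  · exact ⟨fun h => hne (Subtype.ext h), Or.inr ⟨hxy.1.mono hPQ, hxy.2.mono hPQ⟩⟩

theorem visGraph_reachable_mono {P Q : Set Pt} {G H : Finset HalfGuard} (hPQ : P ⊆ Q)
    (hGH : G ⊆ H) {x y : G} (h : (visGraph P G).Reachable x y) :
    (visGraph Q H).Reachable ⟨x, hGH x.2⟩ ⟨y, hGH y.2⟩ :=
  h.map (G' := visGraph Q H) ⟨fun x : G => ⟨x, hGH x.2⟩, visGraph_adj_mono hPQ hGH⟩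

theorem IsCHG.union {P₁ P₂ : Set Pt} {G₁ G₂ : Finset HalfGuard} {g₁ g₂ : HalfGuard}
    (h₁ : IsCHG P₁ G₁) (h₂ : IsCHG P₂ G₂) (hg₁ : g₁ ∈ G₁) (hg₂ : g₂ ∈ G₂)
    (h₁₂ : Sees (P₁ ∪ P₂) g₁ g₂.pos) (h₂₁ : Sees (P₁ ∪ P₂) g₂ g₁.pos) :
    IsCHG (P₁ ∪ P₂) (G₁ ∪ G₂) := by
  refine ⟨h₁.1.union h₂.1, ?_⟩
  have hbridge : (visGraph (P₁ ∪ P₂) (G₁ ∪ G₂)).Reachable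
      ⟨g₁, Finset.mem_union_left _ hg₁⟩ ⟨g₂, Finset.mem_union_right _ hg₂⟩ := by
    by_cases h : g₁ = g₂
    · subst h; rfl
    · exact SimpleGraph.Adj.reachable (by simp [visGraph, h, h₁₂, h₂₁])
  rw [SimpleGraph.connected_iff_exists_forall_reachable]
  refine ⟨⟨g₁, Finset.mem_union_left _ hg₁⟩, fun ⟨x, hx⟩ => ?_⟩
  rcases Finset.mem_union.1 hx with hx | hx
  · exact visGraph_reachable_mono subset_union_left Finset.subset_union_left
      (h₁.2.preconnected ⟨g₁, hg₁⟩ ⟨x, hx⟩)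
  · exact hbridge.trans (visGraph_reachable_mono subset_union_right Finset.subset_union_right
      (h₂.2.preconnected ⟨g₂, hg₂⟩ ⟨x, hx⟩))

/-- **Lemma (SeeEachOther).** Let `P` be a simple polygon partitioned into two polygons
`P₁, P₂` meeting in a line segment `s = [a,b] = P₁ ∩ P₂`. For `i = 1,2` let `Gᵢ` be an
`s`-aligned cooperative half-guard set for `Pᵢ` with `s`-aligned guard `gᵢ ∈ Gᵢ`. Then `g₁`
and `g₂` see each other in `P`, and `G₁ ∪ G₂` is a cooperative half-guard set for `P`. -/
theorem chg_merge_along_aligned_segment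
    {n n₁ n₂ : ℕ} [NeZero n] [NeZero n₁] [NeZero n₂]
    (P : SimplePolygon n) (P₁ : SimplePolygon n₁) (P₂ : SimplePolygon n₂)
    (a b : Pt) (hab : a ≠ b)
    (hunion : P.carrier = P₁.carrier ∪ P₂.carrier)
    (hinter : P₁.carrier ∩ P₂.carrier = segment ℝ a b)
    (G₁ G₂ : Finset HalfGuard) (g₁ g₂ : HalfGuard)
    (hg₁ : g₁ ∈ G₁) (hg₂ : g₂ ∈ G₂)
    (hG₁ : IsCHG P₁.carrier G₁) (hG₂ : IsCHG P₂.carrier G₂)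
    (hal₁ : Aligned P₁.carrier a b g₁) (hal₂ : Aligned P₂.carrier a b g₂) :
    Sees P.carrier g₁ g₂.pos ∧ Sees P.carrier g₂ g₁.pos ∧
    IsCHG P.carrier (G₁ ∪ G₂) := by
  have h₁₂ : Sees (P₁.carrier ∪ P₂.carrier) g₁ g₂.pos :=
    hal₁.sees_pos_union hab hinter.subset hal₂
  have h₂₁ : Sees (P₁.carrier ∪ P₂.carrier) g₂ g₁.pos := by
    rw [union_comm]
    exact hal₂.sees_pos_union hab (inter_comm P₁.carrier _ ▸ hinter.subset) hal₁
  rw [hunion]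
  exact ⟨h₁₂, h₂₁, hG₁.union hG₂ hg₁ hg₂ h₁₂ h₂₁⟩
end
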